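/- arXiv:2211.12639 — 6 statements merged into one kernel-verified Lean document; each statement's English description precedes it below -/
import Mathlib

section
/- Let d ≥ 1 and let Ω ⊆ ℝᵈ be a nonempty closed convex set that contains no affine line. Then there exist a point p ∈ ℝᵈ, a unit vector e, and a constant β > 0 such that ⟨X − p, e⟩ ≥ β·‖X − p‖ for every X ∈ Ω. -/
/-!
Fix `x₀ ∈ Ω`. The recession cone `C = {v | x₀ + t v ∈ Ω for all t ≥ 0}` is a closed convex cone,
and it is salient because `Ω` contains no line. By the bipolar theorem a salient closed cone has
a dual cone with nonempty interior (otherwise the dual lies in a hyperplane `u^⊥` and `±u ∈ C`),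
and an interior point `e` of the dual satisfies `⟪v, e⟫ ≥ α ‖v‖` on `C`. The directions of far
points of `Ω` accumulate only in `C` (compactness of the sphere), so `⟪X - x₀, e⟫ ≥ (α/2) ‖X - x₀‖`
once `‖X - x₀‖ ≥ R`. Moving the vertex back to `p = x₀ - 2R e` absorbs the bounded part of `Ω`.
-/

open RealInnerProductSpace Filter Set

section Recession

variable {E : Type*} [AddCommGroup E] [Module ℝ E] {Ω : Set E} {x₀ u v w : E}

def recessionCone (Ω : Set E) (x₀ : E) : Set E := {v | ∀ t : ℝ, 0 ≤ t → x₀ + t • v ∈ Ω}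

lemma Convex.add_smul_mem_of_le (hΩ : Convex ℝ Ω) (hx₀ : x₀ ∈ Ω) {s t : ℝ}
    (hs : x₀ + s • u ∈ Ω) (ht : 0 ≤ t) (hts : t ≤ s) : x₀ + t • u ∈ Ω := by
  rcases ht.eq_or_lt with rfl | ht
  · simpa using hx₀
  have hs0 : 0 < s := ht.trans_le hts
  have hmem := hΩ.add_smul_mem hx₀ hs ⟨div_nonneg ht.le hs0.le, (div_le_one hs0).2 hts⟩
  rwa [smul_smul, div_mul_cancel₀ _ hs0.ne'] at hmem

lemma zero_mem_recessionCone (hx₀ : x₀ ∈ Ω) : (0 : E) ∈ recessionCone Ω x₀ :=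
  fun _ _ => by simpa using hx₀

lemma smul_mem_recessionCone {c : ℝ} (hc : 0 ≤ c) (hv : v ∈ recessionCone Ω x₀) :
    c • v ∈ recessionCone Ω x₀ := fun t ht => by
  rw [smul_smul]
  exact hv (t * c) (by positivity)

lemma Convex.add_mem_recessionCone (hΩ : Convex ℝ Ω) (hv : v ∈ recessionCone Ω x₀)
    (hw : w ∈ recessionCone Ω x₀) : v + w ∈ recessionCone Ω x₀ := fun t ht => by
  have hmem := hΩ (hv (2 * t) (by linarith)) (hw (2 * t) (by linarith))
    (by norm_num : (0 : ℝ) ≤ 1 / 2) (by norm_num : (0 : ℝ) ≤ 1 / 2) (by norm_num)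
  convert hmem using 1
  module

lemma Convex.mem_recessionCone_of_forall_nat (hΩ : Convex ℝ Ω) (hx₀ : x₀ ∈ Ω)
    (h : ∀ n : ℕ, x₀ + (n : ℝ) • u ∈ Ω) : u ∈ recessionCone Ω x₀ :=
  fun t ht => hΩ.add_smul_mem_of_le hx₀ (h ⌈t⌉₊) ht (Nat.le_ceil t)

lemma eq_zero_of_mem_recessionCone_of_neg_mem
    (hline : ¬ ∃ q v : E, v ≠ 0 ∧ ∀ t : ℝ, q + t • v ∈ Ω)
    (hv : v ∈ recessionCone Ω x₀) (hnv : -v ∈ recessionCone Ω x₀) : v = 0 := by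
  by_contra hv0
  refine hline ⟨x₀, v, hv0, fun t => ?_⟩
  rcases le_or_gt 0 t with ht | ht
  · exact hv t ht
  · simpa using hnv (-t) (by linarith)

variable [TopologicalSpace E] [ContinuousAdd E] [ContinuousSMul ℝ E]

lemma isClosed_recessionCone (hΩ : IsClosed Ω) : IsClosed (recessionCone Ω x₀) := by
  have hinter : recessionCone Ω x₀ = ⋂ t : ℝ, ⋂ _ : 0 ≤ t, (fun v => x₀ + t • v) ⁻¹' Ω := by
    ext
    simp [recessionCone]
  rw [hinter]
  exact isClosed_iInter fun t => isClosed_iInter fun _ =>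
    hΩ.preimage (continuous_const.add (continuous_const_smul t))

def recessionProperCone (hΩ : Convex ℝ Ω) (hcl : IsClosed Ω) (hx₀ : x₀ ∈ Ω) : ProperCone ℝ E where
  carrier := recessionCone Ω x₀
  add_mem' := hΩ.add_mem_recessionCone
  zero_mem' := zero_mem_recessionCone hx₀
  smul_mem' c _ hv := smul_mem_recessionCone c.2 hv
  isClosed' := isClosed_recessionCone hcl

end Recession

section DualCone

variable {E : Type*} [NormedAddCommGroup E] [InnerProductSpace ℝ E] [CompleteSpace E]

lemma mul_norm_le_inner_of_closedBall_subset_innerDual {s : Set E} {e₀ v : E} {ε : ℝ}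
    (hε : 0 ≤ ε) (hball : Metric.closedBall e₀ ε ⊆ ProperCone.innerDual s) (hv : v ∈ s) :
    ε * ‖v‖ ≤ ⟪v, e₀⟫ := by
  rcases eq_or_ne v 0 with rfl | hv0
  · simp
  have hnv : 0 < ‖v‖ := norm_pos_iff.2 hv0
  have hmem : e₀ - (ε / ‖v‖) • v ∈ Metric.closedBall e₀ ε := by
    rw [Metric.mem_closedBall, dist_eq_norm, sub_sub_cancel_left, norm_neg, norm_smul,
      Real.norm_of_nonneg (by positivity), div_mul_cancel₀ _ hnv.ne']
  have hinner := ProperCone.mem_innerDual.1 (hball hmem) hv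
  rw [inner_sub_right, real_inner_smul_right, real_inner_self_eq_norm_sq] at hinner
  have hsq : ε / ‖v‖ * ‖v‖ ^ 2 = ε * ‖v‖ := by field_simp
  linarith

variable [FiniteDimensional ℝ E]

lemma ProperCone.interior_innerDual_nonempty (C : ProperCone ℝ E)
    (hC : ∀ v ∈ C, -v ∈ C → v = 0) : (interior (innerDual (C : Set E) : Set E)).Nonempty := by
  set D : Set E := (innerDual (C : Set E) : Set E)
  by_contra hint
  have hD0 : (0 : E) ∈ D := zero_mem _
  have hspan : vectorSpan ℝ D ≠ ⊤ := fun h => hint <| by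
    rwa [(innerDual (C : Set E)).convex.interior_nonempty_iff_affineSpan_eq_top,
      AffineSubspace.affineSpan_eq_top_iff_vectorSpan_eq_top_of_nonempty _ _ _ ⟨0, hD0⟩]
  obtain ⟨u, hu, hu0⟩ := Submodule.exists_mem_ne_zero_of_ne_bot
    (mt Submodule.orthogonal_eq_bot_iff.1 hspan)
  have hperp : ∀ x ∈ D, ⟪x, u⟫ = 0 := fun x hx =>
    Submodule.inner_right_of_mem_orthogonal (by simpa using vsub_mem_vectorSpan ℝ hx hD0) hu
  have hmem : ∀ c : ℝ, c • u ∈ C := fun c => by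
    rw [← innerDual_innerDual C]
    exact fun x hx => by simp [hperp x hx]
  exact hu0 (hC u (by simpa using hmem 1) (by simpa using hmem (-1)))

lemma ProperCone.exists_unit_forall_mul_norm_le_inner [Nontrivial E] (C : ProperCone ℝ E)
    (hC : ∀ v ∈ C, -v ∈ C → v = 0) :
    ∃ e : E, ‖e‖ = 1 ∧ ∃ α : ℝ, 0 < α ∧ ∀ v ∈ C, α * ‖v‖ ≤ ⟪v, e⟫ := by
  obtain ⟨e₁, he₁⟩ := C.interior_innerDual_nonempty hC
  obtain ⟨e₀, he₀, he₀0⟩ :=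
    (infinite_of_mem_nhds e₁ (isOpen_interior.mem_nhds he₁)).nontrivial.exists_ne 0
  obtain ⟨ε, hε, hball⟩ :=
    Metric.nhds_basis_closedBall.mem_iff.1 (mem_interior_iff_mem_nhds.1 he₀)
  have hnorm : 0 < ‖e₀‖ := norm_pos_iff.2 he₀0
  refine ⟨‖e₀‖⁻¹ • e₀, by simp [norm_smul, hnorm.ne'], ε / ‖e₀‖, by positivity, fun v hv => ?_⟩
  have hbound := mul_norm_le_inner_of_closedBall_subset_innerDual hε.le hball hv
  rw [real_inner_smul_right, div_mul_eq_mul_div, div_eq_inv_mul]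
  exact mul_le_mul_of_nonneg_left hbound (by positivity)

end DualCone

section FarField

variable {E : Type*} [NormedAddCommGroup E] [InnerProductSpace ℝ E] [ProperSpace E]
  {Ω : Set E} {x₀ : E}

lemma Convex.exists_forall_mul_norm_le_inner_of_le_norm (hΩ : Convex ℝ Ω) (hcl : IsClosed Ω)
    (hx₀ : x₀ ∈ Ω) {e : E} {α γ : ℝ} (hγ : γ < α)
    (hC : ∀ v ∈ recessionCone Ω x₀, α * ‖v‖ ≤ ⟪v, e⟫) :
    ∃ R : ℝ, 0 ≤ R ∧ ∀ X ∈ Ω, R ≤ ‖X - x₀‖ → γ * ‖X - x₀‖ ≤ ⟪X - x₀, e⟫ := by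
  set V : ℕ → Set E := fun n => Metric.sphere 0 1 ∩ (fun u => x₀ + (n : ℝ) • u) ⁻¹' Ω
  have hV_anti : Antitone V := fun m n hmn u hu =>
    ⟨hu.1, hΩ.add_smul_mem_of_le hx₀ hu.2 (Nat.cast_nonneg m) (Nat.cast_le.2 hmn)⟩
  have hV_compact : ∀ n, IsCompact (V n) := fun n => (isCompact_sphere 0 1).inter_right
    (hcl.preimage (continuous_const.add (continuous_const_smul _)))
  -- `⋂ n, V n` consists of unit vectors of the recession cone.
  have hU : ∀ u ∈ ⋂ n, V n, {u | γ < ⟪u, e⟫} ∈ nhds u := by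
    intro u hu
    simp only [mem_iInter] at hu
    have hunit : ‖u‖ = 1 := mem_sphere_zero_iff_norm.1 (hu 0).1
    have huC := hC u (hΩ.mem_recessionCone_of_forall_nat hx₀ fun n => (hu n).2)
    rw [hunit, mul_one] at huC
    exact (isOpen_lt continuous_const (continuous_id.inner continuous_const)).mem_nhds
      (hγ.trans_le huC)
  obtain ⟨n, hn⟩ := exists_subset_nhds_of_isCompact hV_anti.directed_ge hV_compact hU
  refine ⟨n + 1, by positivity, fun X hX hR => ?_⟩
  have hr : 0 < ‖X - x₀‖ := by linarith [(Nat.cast_nonneg n : (0 : ℝ) ≤ n)]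
  have hdir : ‖X - x₀‖⁻¹ • (X - x₀) ∈ V n := by
    refine ⟨by simp [norm_smul, hr.ne'], hΩ.add_smul_mem_of_le hx₀ (s := ‖X - x₀‖) ?_
      (Nat.cast_nonneg n) (by linarith)⟩
    rwa [smul_smul, mul_inv_cancel₀ hr.ne', one_smul, add_sub_cancel]
  have hlt : γ < ‖X - x₀‖⁻¹ * ⟪X - x₀, e⟫ := by simpa [real_inner_smul_left] using hn hdir
  rw [lt_inv_mul_iff₀ hr, mul_comm] at hlt
  exact hlt.le

end FarField

lemma min_mul_norm_add_smul_le_inner {E : Type*} [NormedAddCommGroup E] [InnerProductSpace ℝ E]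
    {e Y : E} {γ R : ℝ} (he : ‖e‖ = 1) (hγ : 0 < γ) (hR : 0 ≤ R)
    (hY : R ≤ ‖Y‖ → γ * ‖Y‖ ≤ ⟪Y, e⟫) :
    min γ (1 / 3) * ‖Y + (2 * R) • e‖ ≤ ⟪Y + (2 * R) • e, e⟫ := by
  have hinner : ⟪Y + (2 * R) • e, e⟫ = ⟪Y, e⟫ + 2 * R := by
    rw [inner_add_left, real_inner_smul_left, real_inner_self_eq_norm_sq, he]
    ring
  have hnorm : ‖Y + (2 * R) • e‖ ≤ ‖Y‖ + 2 * R := by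
    refine (norm_add_le _ _).trans_eq ?_
    rw [norm_smul, he, mul_one, Real.norm_of_nonneg (by positivity)]
  have hβ : min γ (1 / 3) * ‖Y + (2 * R) • e‖ ≤ min γ (1 / 3) * (‖Y‖ + 2 * R) :=
    mul_le_mul_of_nonneg_left hnorm (by positivity)
  have hβγ : min γ (1 / 3) ≤ γ := min_le_left _ _
  have hβ3 : min γ (1 / 3) ≤ 1 / 3 := min_le_right _ _
  rw [hinner]
  rcases le_or_gt R ‖Y‖ with hfar | hnear
  · nlinarith [hY hfar, norm_nonneg Y]
  · have hlow : -‖Y‖ ≤ ⟪Y, e⟫ := by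
      simpa [he] using neg_le_of_abs_le (abs_real_inner_le_norm Y e)
    nlinarith [norm_nonneg Y]

/-- A nonempty closed convex set in `ℝᵈ` containing no affine line lies in a uniform cone:
there are `p`, a unit vector `e`, and `β > 0` with `⟨X - p, e⟩ ≥ β‖X - p‖` on the set. -/
theorem exists_uniform_cone_of_no_line (d : ℕ) (hd : 1 ≤ d)
    (Ω : Set (EuclideanSpace ℝ (Fin d)))
    (hne : Ω.Nonempty) (hcl : IsClosed Ω) (hconv : Convex ℝ Ω)
    (hline : ¬ ∃ (q v : EuclideanSpace ℝ (Fin d)), v ≠ 0 ∧ ∀ t : ℝ, q + t • v ∈ Ω) :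
    ∃ (p e : EuclideanSpace ℝ (Fin d)) (β : ℝ), ‖e‖ = 1 ∧ 0 < β ∧
      ∀ X ∈ Ω, β * ‖X - p‖ ≤ ⟪X - p, e⟫ := by
  have : Nontrivial (EuclideanSpace ℝ (Fin d)) :=
    Module.nontrivial_of_finrank_pos (R := ℝ) (by rwa [finrank_euclideanSpace_fin])
  obtain ⟨x₀, hx₀⟩ := hne
  obtain ⟨e, he, α, hα, hC⟩ :=
    (recessionProperCone hconv hcl hx₀).exists_unit_forall_mul_norm_le_inner
      fun _ hv hnv => eq_zero_of_mem_recessionCone_of_neg_mem hline hv hnv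
  obtain ⟨R, hR, hfar⟩ :=
    hconv.exists_forall_mul_norm_le_inner_of_le_norm hcl hx₀ (half_lt_self hα) hC
  refine ⟨x₀ - (2 * R) • e, e, min (α / 2) (1 / 3), he, by positivity, fun X hX => ?_⟩
  have hX' : X - (x₀ - (2 * R) • e) = (X - x₀) + (2 * R) • e := by abel
  rw [hX']
  exact min_mul_norm_add_smul_le_inner he (half_pos hα) hR (hfar X hX)
end

section
/- Let d ≥ 1 and let Ω ⊆ ℝᵈ be a closed convex unbounded set containing no affine line. Then there exists a unit vector e such that (i) e is a recession direction of Ω, i.e. X + t·e ∈ Ω for every X ∈ Ω and t ≥ 0, and (ii) for every h ∈ ℝ, the slab Ω ∩ {X : ⟨X, e⟩ ≤ h} is compact. -/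
/-!
The recession cone of a closed convex set is its asymptotic cone. For `Ω` it is a closed convex
cone, nontrivial because `Ω` is unbounded and salient because `Ω` contains no line. The unit
vectors of a salient closed cone form a compact set whose convex hull misses the origin; the
point `p` of least norm in that hull lies in the cone and satisfies `‖p‖² ≤ ⟪x, p⟫` on the hull,
so `e = p / ‖p‖` pairs positively with every nonzero recession direction. A slab
`Ω ∩ {⟪X, e⟫ ≤ h}` can therefore only have the trivial asymptotic cone, so it is bounded.
-/

open RealInnerProductSpace Set

theorem IsCompact.convexHull_of_finiteDimensional {E : Type*} [NormedAddCommGroup E]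
    [NormedSpace ℝ E] [FiniteDimensional ℝ E] {s : Set E} (hs : IsCompact s) :
    IsCompact (convexHull ℝ s) := by
  obtain rfl | ⟨z₀, hz₀⟩ := s.eq_empty_or_nonempty
  · simp
  -- By Carathéodory, the hull is the image of `Δ_N × s^N` under `(w, z) ↦ ∑ wᵢ zᵢ`.
  set N := Module.finrank ℝ E + 1
  convert ((isCompact_stdSimplex ℝ (Fin N)).prod (isCompact_univ_pi fun _ => hs)).image
    (f := fun p : (Fin N → ℝ) × (Fin N → E) => ∑ i, p.1 i • p.2 i) (by fun_prop)
  refine Subset.antisymm (fun x hx => ?_) ?_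
  · obtain ⟨ι, _, z, w, hzs, hai, hw, hw1, rfl⟩ := eq_pos_convex_span_of_mem_convexHull hx
    have hcard : Fintype.card ι ≤ N :=
      hai.card_le_finrank_succ.trans (Nat.succ_le_succ (Submodule.finrank_le _))
    obtain ⟨f⟩ :=
      Function.Embedding.nonempty_of_card_le (hcard.trans_eq (Fintype.card_fin N).symm)
    have hw' : ∀ i ∉ range f, Function.extend f w 0 i = 0 := fun i hi =>
      by rw [Function.extend_apply' _ _ _ fun ⟨j, hj⟩ => hi ⟨j, hj⟩, Pi.zero_apply]
    classical
    refine ⟨(Function.extend f w 0, Function.extend f z fun _ => z₀),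
      ⟨⟨fun i => ?_, ?_⟩, fun i _ => ?_⟩, ?_⟩
    · dsimp only
      rw [Function.extend_def]
      split_ifs
      exacts [(hw _).le, le_rfl]
    · rw [← hw1]
      exact (Fintype.sum_of_injective f f.injective _ _ hw'
        fun j => (f.injective.extend_apply _ _ _).symm).symm
    · dsimp only
      rw [Function.extend_def]
      split_ifs
      exacts [hzs (mem_range_self _), hz₀]
    · refine (Fintype.sum_of_injective f f.injective _ _ (fun i hi => ?_) fun j => ?_).symm
      · simp only [hw' i hi, zero_smul]
      · simp only [f.injective.extend_apply]
  · rintro _ ⟨⟨w, z⟩, ⟨hw, hz⟩, rfl⟩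
    exact (convex_convexHull ℝ s).sum_mem (fun i _ => hw.1 i) hw.2
      fun i _ => subset_convexHull ℝ s (hz i (mem_univ i))

theorem exists_mem_forall_norm_sq_le_inner {F : Type*} [NormedAddCommGroup F]
    [InnerProductSpace ℝ F] {K : Set F} (hne : K.Nonempty) (hc : IsComplete K)
    (hK : Convex ℝ K) : ∃ p ∈ K, ∀ x ∈ K, ‖p‖ ^ 2 ≤ ⟪x, p⟫ := by
  obtain ⟨p, hpK, hmin⟩ := exists_norm_eq_iInf_of_complete_convex hne hc hK 0
  refine ⟨p, hpK, fun x hx => ?_⟩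
  have := (norm_eq_iInf_iff_real_inner_le_zero hK hpK).1 hmin x hx
  rw [zero_sub, inner_neg_left, inner_sub_right, real_inner_self_eq_norm_sq,
    real_inner_comm] at this
  linarith

namespace ConvexCone

theorem Salient.convex_diff_zero {V : Type*} [AddCommGroup V] [Module ℝ V] {C : ConvexCone ℝ V}
    (hC : C.Salient) : Convex ℝ ((C : Set V) \ {0}) := by
  rintro x ⟨hx, hx0⟩ y ⟨hy, hy0⟩ a b ha hb hab
  obtain rfl | ha := ha.eq_or_lt
  · simpa [(zero_add b).symm.trans hab] using ⟨hy, hy0⟩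
  obtain rfl | hb := hb.eq_or_lt
  · simpa [(add_zero a).symm.trans hab] using ⟨hx, hx0⟩
  refine ⟨C.add_mem (C.smul_mem ha hx) (C.smul_mem hb hy), fun h0 => ?_⟩
  have hax : a • x = -(b • y) := eq_neg_of_add_eq_zero_left h0
  have hnx : -x = a⁻¹ • b • y := by
    rw [← neg_neg (b • y), ← hax, smul_neg, inv_smul_smul₀ ha.ne']
  exact hC x hx hx0 (hnx ▸ C.smul_mem (inv_pos.2 ha) (C.smul_mem hb hy))

theorem exists_unit_mem_forall_inner_pos {E : Type*} [NormedAddCommGroup E]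
    [InnerProductSpace ℝ E] [FiniteDimensional ℝ E] (C : ConvexCone ℝ E)
    (hCcl : IsClosed (C : Set E)) (hC : C.Salient) (hne : ∃ v ∈ C, v ≠ 0) :
    ∃ e ∈ C, ‖e‖ = 1 ∧ ∀ v ∈ C, v ≠ 0 → 0 < ⟪v, e⟫ := by
  set S := (C : Set E) ∩ Metric.sphere 0 1
  have normalize : ∀ v ∈ C, v ≠ 0 → ‖v‖⁻¹ • v ∈ convexHull ℝ S := fun v hv hv0 =>
    subset_convexHull ℝ S ⟨C.smul_mem (inv_pos.2 (norm_pos_iff.2 hv0)) hv,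
      by simpa using norm_smul_inv_norm (𝕜 := ℝ) hv0⟩
  have hK : convexHull ℝ S ⊆ (C : Set E) \ {0} :=
    convexHull_min (fun z hz => ⟨hz.1, ne_zero_of_mem_sphere one_ne_zero ⟨z, hz.2⟩⟩)
      hC.convex_diff_zero
  obtain ⟨v, hv, hv0⟩ := hne
  obtain ⟨p, hpK, hp⟩ := exists_mem_forall_norm_sq_le_inner ⟨_, normalize v hv hv0⟩
    ((isCompact_sphere 0 1).inter_left hCcl).convexHull_of_finiteDimensional.isComplete
    (convex_convexHull ℝ S)
  obtain ⟨hpC, hp0⟩ := hK hpK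
  refine ⟨‖p‖⁻¹ • p, C.smul_mem (inv_pos.2 (norm_pos_iff.2 hp0)) hpC,
    by simpa using norm_smul_inv_norm (𝕜 := ℝ) hp0, fun w hw hw0 => ?_⟩
  have hwp : 0 < ‖w‖⁻¹ * ⟪w, p⟫ := by
    rw [← real_inner_smul_left]
    exact (pow_pos (norm_pos_iff.2 hp0) 2).trans_le (hp _ (normalize w hw hw0))
  rw [real_inner_smul_right]
  exact mul_pos (inv_pos.2 (norm_pos_iff.2 hp0))
    ((mul_pos_iff_of_pos_left (inv_pos.2 (norm_pos_iff.2 hw0))).1 hwp)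

end ConvexCone

section AsymptoticCone

variable {V : Type*} [AddCommGroup V] [Module ℝ V] [TopologicalSpace V]
  [IsTopologicalAddGroup V] [ContinuousSMul ℝ V] {s : Set V}

theorem Convex.add_smul_mem_of_mem_asymptoticCone (hs : Convex ℝ s) (hcl : IsClosed s)
    {p v : V} (hp : p ∈ s) (hv : v ∈ asymptoticCone ℝ s) {t : ℝ} (ht : 0 ≤ t) :
    p + t • v ∈ s := by
  simpa [add_comm] using hs.smul_vadd_mem_of_isClosed_of_mem_asymptoticCone hcl ht hv hp

def Convex.asymptoticConvexCone (hs : Convex ℝ s) : ConvexCone ℝ V where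
  carrier := asymptoticCone ℝ s
  smul_mem' _ hc _ hv := smul_mem_asymptoticCone hc.le hv
  add_mem' u hu v hv := by
    have := smul_mem_asymptoticCone zero_le_two
      (hs.asymptoticCone hu hv one_half_pos.le one_half_pos.le (add_halves 1))
    rwa [smul_add, smul_smul, smul_smul, mul_one_div_cancel two_ne_zero, one_smul, one_smul]
      at this

theorem Convex.salient_asymptoticConvexCone (hs : Convex ℝ s) (hcl : IsClosed s)
    (hline : ¬ ∃ p v : V, v ≠ 0 ∧ ∀ t : ℝ, p + t • v ∈ s) :
    hs.asymptoticConvexCone.Salient := by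
  intro v hv hv0 hnv
  obtain ⟨p, hp⟩ := asymptoticCone_nonempty.mp ⟨v, hv⟩
  refine hline ⟨p, v, hv0, fun t => ?_⟩
  rcases le_total 0 t with ht | ht
  · exact hs.add_smul_mem_of_mem_asymptoticCone hcl hp hv ht
  · simpa using hs.add_smul_mem_of_mem_asymptoticCone hcl hp hnv (neg_nonneg.2 ht)

end AsymptoticCone

theorem inner_nonpos_of_mem_asymptoticCone_halfSpace {E : Type*} [NormedAddCommGroup E]
    [InnerProductSpace ℝ E] {e v : E} {h : ℝ}
    (hv : v ∈ asymptoticCone ℝ {x : E | ⟪x, e⟫ ≤ h}) : ⟪v, e⟫ ≤ 0 := by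
  have hconv : Convex ℝ {x : E | ⟪x, e⟫ ≤ h} :=
    convex_halfSpace_le
      ⟨fun x y => inner_add_left x y e, fun c x => real_inner_smul_left x e c⟩ h
  have hcl : IsClosed {x : E | ⟪x, e⟫ ≤ h} := isClosed_le (by fun_prop) continuous_const
  obtain ⟨p, hp⟩ := asymptoticCone_nonempty.mp ⟨v, hv⟩
  have hray : ∀ t : ℝ, 0 ≤ t → ⟪p, e⟫ + t * ⟪v, e⟫ ≤ h := fun t ht => by
    simpa [inner_add_left, real_inner_smul_left] using
      hconv.add_smul_mem_of_mem_asymptoticCone hcl hp hv ht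
  by_contra! hpos
  have := hray ((h - ⟪p, e⟫ + 1) / ⟪v, e⟫) (div_nonneg (by linarith [hray 0 le_rfl]) hpos.le)
  rw [div_mul_cancel₀ _ hpos.ne'] at this
  linarith

theorem unbounded_line_free_convex_structure_general (d : ℕ)
    (Ω : Set (EuclideanSpace ℝ (Fin d)))
    (hcl : IsClosed Ω) (hconv : Convex ℝ Ω)
    (hub : ¬ Bornology.IsBounded Ω)
    (hline : ¬ ∃ (q v : EuclideanSpace ℝ (Fin d)), v ≠ 0 ∧ ∀ t : ℝ, q + t • v ∈ Ω) :
    ∃ e : EuclideanSpace ℝ (Fin d), ‖e‖ = 1 ∧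
      (∀ X ∈ Ω, ∀ t : ℝ, 0 ≤ t → X + t • e ∈ Ω) ∧
      ∀ h : ℝ, IsCompact (Ω ∩ {X | ⟪X, e⟫ ≤ h}) := by
  obtain ⟨v, hv0, hv⟩ := not_bounded_iff_exists_ne_zero_mem_asymptoticCone.mp hub
  obtain ⟨e, heC, he1, hpos⟩ := hconv.asymptoticConvexCone.exists_unit_mem_forall_inner_pos
    isClosed_asymptoticCone (hconv.salient_asymptoticConvexCone hcl hline) ⟨v, hv, hv0⟩
  refine ⟨e, he1, fun X hX t ht => hconv.add_smul_mem_of_mem_asymptoticCone hcl hX heC ht,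
    fun h => Metric.isCompact_of_isClosed_isBounded
      (hcl.inter (isClosed_le (by fun_prop) continuous_const)) ?_⟩
  refine isBounded_iff_asymptoticCone_subset_singleton.mpr fun w hw => ?_
  by_contra hw0
  exact (hpos w (asymptoticCone_mono inter_subset_left hw) hw0).not_ge
    (inner_nonpos_of_mem_asymptoticCone_halfSpace (asymptoticCone_mono inter_subset_right hw))

/-- An unbounded closed convex set in `ℝᵈ` containing no affine line admits a unit vector
`e` which is a recession direction and for which every slab `{⟨X, e⟩ ≤ h}` intersects the
set in a compact set. -/
theorem unbounded_line_free_convex_structure (d : ℕ) (hd : 1 ≤ d)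
    (Ω : Set (EuclideanSpace ℝ (Fin d)))
    (hcl : IsClosed Ω) (hconv : Convex ℝ Ω)
    (hub : ¬ Bornology.IsBounded Ω)
    (hline : ¬ ∃ (q v : EuclideanSpace ℝ (Fin d)), v ≠ 0 ∧ ∀ t : ℝ, q + t • v ∈ Ω) :
    ∃ e : EuclideanSpace ℝ (Fin d), ‖e‖ = 1 ∧
      (∀ X ∈ Ω, ∀ t : ℝ, 0 ≤ t → X + t • e ∈ Ω) ∧
      ∀ h : ℝ, IsCompact (Ω ∩ {X | ⟪X, e⟫ ≤ h}) :=
  unbounded_line_free_convex_structure_general d Ω hcl hconv hub hline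
end

section
/- Fix n ≥ 1 and for r > 0, X ∈ ℝ^{n+1}, t ∈ ℝ define the parabolic cylinder P_r(X, t) := {(Y, s) ∈ ℝ^{n+1} × ℝ : ‖Y − X‖ < r and t − r²/(2n) < s ≤ t}. Let S ⊆ ℝ^{n+1} × ℝ, let f : S → ℝ, let (X₀, t₀) ∈ S and δ > 0 with f(X₀, t₀) > 0, and suppose f is bounded above on S ∩ P_{δ/f(X₀,t₀)}(X₀, t₀). Then there exists (Y, s) ∈ S ∩ P_{δ/(2 f(X₀,t₀))}(X₀, t₀) such that f(Y, s) ≥ f(X₀, t₀) and f(Z, r) ≤ 2·f(Y, s) for every (Z, r) ∈ S ∩ P_{δ/(4 f(Y,s))}(Y, s). -/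
/-!
Set `ρ(p) = δ / (2 f(p))`. Starting from `(X₀, t₀)`, as long as the current point `p` is not
good there is `p'` in `P_{ρ(p)/2}(p)` with `f(p') > 2 f(p)`; then `ρ(p') ≤ ρ(p)/2`, so the
cylinder `P_{ρ(p')}(p')` is nested in `P_{ρ(p)}(p)` and hence in `P_{ρ(X₀,t₀)}(X₀, t₀)`.
Along this chain `f` at least doubles at each step while staying bounded on
`S ∩ P_{δ/f(X₀,t₀)}(X₀, t₀)`, so the chain stops at a good point.
-/

/-- The parabolic cylinder `P_r(X, t)` in `ℝ^{n+1} × ℝ`. -/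
def parabolicCylinder (n : ℕ) (r : ℝ) (X : EuclideanSpace ℝ (Fin (n + 1))) (t : ℝ) :
    Set (EuclideanSpace ℝ (Fin (n + 1)) × ℝ) :=
  {p | ‖p.1 - X‖ < r ∧ t - r ^ 2 / (2 * n) < p.2 ∧ p.2 ≤ t}

theorem exists_le_and_of_bounded_of_doubling {α : Type*} {A : Set α} {f : α → ℝ} {M : ℝ}
    (good : α → Prop) (hM : ∀ p ∈ A, f p ≤ M)
    (hstep : ∀ p ∈ A, ¬ good p → ∃ p' ∈ A, 2 * f p < f p')
    {p₀ : α} (hp₀ : p₀ ∈ A) (hf₀ : 0 < f p₀) :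
    ∃ p ∈ A, f p₀ ≤ f p ∧ good p := by
  by_contra! hbad
  have hgrow : ∀ k : ℕ, ∃ p ∈ A, 2 ^ k * f p₀ ≤ f p := by
    intro k
    induction k with
    | zero => exact ⟨p₀, hp₀, by simp⟩
    | succ k ih =>
      obtain ⟨p, hp, hfp⟩ := ih
      have hp₀p : f p₀ ≤ f p :=
        (le_mul_of_one_le_left hf₀.le (one_le_pow₀ one_le_two)).trans hfp
      obtain ⟨p', hp', hlt⟩ := hstep p hp (hbad p hp hp₀p)
      exact ⟨p', hp', by rw [pow_succ]; linarith⟩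
  obtain ⟨k, hk⟩ := pow_unbounded_of_one_lt (M / f p₀) (one_lt_two (α := ℝ))
  obtain ⟨p, hp, hfp⟩ := hgrow k
  rw [div_lt_iff₀ hf₀] at hk
  linarith [hM p hp]

section ParabolicCylinder

variable {n : ℕ} {r r' : ℝ} {X Y Z : EuclideanSpace ℝ (Fin (n + 1))} {t s u : ℝ}

theorem mem_parabolicCylinder_self (hn : 1 ≤ n) (hr : 0 < r) :
    (X, t) ∈ parabolicCylinder n r X t := by
  have hn' : (0 : ℝ) < 2 * n := by positivity
  exact ⟨by simpa using hr, by simp only; linarith [div_pos (pow_pos hr 2) hn'], le_rfl⟩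

theorem parabolicCylinder_mono (h : r ≤ r') :
    parabolicCylinder n r X t ⊆ parabolicCylinder n r' X t := by
  rintro p ⟨hdist, htime, hle⟩
  have hr : 0 ≤ r := (norm_nonneg _).trans hdist.le
  have hsq : r ^ 2 / (2 * n) ≤ r' ^ 2 / (2 * n) := by gcongr
  exact ⟨hdist.trans_le h, by linarith, hle⟩

theorem parabolicCylinder_subset_of_mem_half (hZ : (Z, u) ∈ parabolicCylinder n (r / 2) Y s)
    (hr' : r' ≤ r / 2) :
    parabolicCylinder n r' Z u ⊆ parabolicCylinder n r Y s := by
  obtain ⟨hZY, hZtime, hus⟩ := hZ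
  rintro ⟨W, v⟩ ⟨hWZ, hWtime, hvu⟩
  simp only at hZY hZtime hus hWZ hWtime hvu
  have hr'0 : 0 ≤ r' := (norm_nonneg _).trans hWZ.le
  have hsq : r' ^ 2 + (r / 2) ^ 2 ≤ r ^ 2 := by nlinarith
  have htime : r' ^ 2 / (2 * n) + (r / 2) ^ 2 / (2 * n) ≤ r ^ 2 / (2 * n) := by
    rw [← add_div]; gcongr
  have hWY : ‖W - Y‖ ≤ ‖W - Z‖ + ‖Z - Y‖ := norm_sub_le_norm_sub_add_norm_sub W Z Y
  exact ⟨by linarith, by simp only; linarith, hvu.trans hus⟩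

end ParabolicCylinder

/-- Point-selection lemma: if `f` is positive at `(X₀, t₀) ∈ S` and bounded above on
`S ∩ P_{δ/f(X₀,t₀)}(X₀, t₀)`, then there is `(Y, s) ∈ S ∩ P_{δ/(2f(X₀,t₀))}(X₀, t₀)` with
`f(Y, s) ≥ f(X₀, t₀)` and `f ≤ 2 f(Y, s)` on `S ∩ P_{δ/(4 f(Y,s))}(Y, s)`. -/
theorem point_selection (n : ℕ) (hn : 1 ≤ n)
    (S : Set (EuclideanSpace ℝ (Fin (n + 1)) × ℝ))
    (f : EuclideanSpace ℝ (Fin (n + 1)) × ℝ → ℝ)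
    (X₀ : EuclideanSpace ℝ (Fin (n + 1))) (t₀ : ℝ) (hmem : (X₀, t₀) ∈ S)
    (δ : ℝ) (hδ : 0 < δ) (hf₀ : 0 < f (X₀, t₀))
    (hbdd : ∃ M : ℝ, ∀ p ∈ S ∩ parabolicCylinder n (δ / f (X₀, t₀)) X₀ t₀, f p ≤ M) :
    ∃ (Y : EuclideanSpace ℝ (Fin (n + 1))) (s : ℝ),
      (Y, s) ∈ S ∩ parabolicCylinder n (δ / (2 * f (X₀, t₀))) X₀ t₀ ∧
      f (X₀, t₀) ≤ f (Y, s) ∧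
      ∀ p ∈ S ∩ parabolicCylinder n (δ / (4 * f (Y, s))) Y s, f p ≤ 2 * f (Y, s) := by
  obtain ⟨M, hM⟩ := hbdd
  set q := f (X₀, t₀)
  let ρ : EuclideanSpace ℝ (Fin (n + 1)) × ℝ → ℝ := fun p ↦ δ / (2 * f p)
  let A := {p ∈ S | q ≤ f p ∧
    parabolicCylinder n (ρ p) p.1 p.2 ⊆ parabolicCylinder n (δ / (2 * q)) X₀ t₀}
  have hA : ∀ p ∈ A, p ∈ S ∩ parabolicCylinder n (δ / (2 * q)) X₀ t₀ :=
    fun p ⟨hpS, hqp, hsub⟩ ↦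
      ⟨hpS, hsub (mem_parabolicCylinder_self hn (by positivity [hf₀.trans_le hqp]))⟩
  have hAM : ∀ p ∈ A, f p ≤ M := fun p hp ↦
    hM p ⟨(hA p hp).1, parabolicCylinder_mono (by gcongr; linarith) (hA p hp).2⟩
  have hstep : ∀ p ∈ A, ¬ (∀ p' ∈ S ∩ parabolicCylinder n (δ / (4 * f p)) p.1 p.2,
      f p' ≤ 2 * f p) → ∃ p' ∈ A, 2 * f p < f p' := by
    rintro p ⟨-, hqp, hsub⟩ hbad
    push Not at hbad
    obtain ⟨p', ⟨hp'S, hp'cyl⟩, hlt⟩ := hbad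
    have hfp : 0 < f p := hf₀.trans_le hqp
    rw [show δ / (4 * f p) = ρ p / 2 by ring] at hp'cyl
    have hρ : ρ p' ≤ ρ p / 2 := by
      rw [show ρ p / 2 = δ / (4 * f p) by ring]
      exact div_le_div_of_nonneg_left hδ.le (by positivity) (by linarith)
    have hnested := (parabolicCylinder_subset_of_mem_half hp'cyl hρ).trans hsub
    exact ⟨p', ⟨hp'S, by linarith, hnested⟩, hlt⟩
  obtain ⟨⟨Y, s⟩, hYs, hle, hgood⟩ :=
    exists_le_and_of_bounded_of_doubling _ hAM hstep (p₀ := (X₀, t₀))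
      ⟨hmem, le_rfl, subset_rfl⟩ hf₀
  exact ⟨Y, s, hA _ hYs, hle, hgood⟩
end

section
/- Let E be a real normed vector space and let C ⊆ E be a closed convex set with 0 ∈ C. Suppose there are sequences (aₖ) and (bₖ) in C with ‖aₖ‖ → ∞ and ‖bₖ‖ → ∞ such that aₖ/‖aₖ‖ → u and bₖ/‖bₖ‖ → −u for some vector u. Then C contains the full line through each of its points in the direction u: for every p ∈ C and every t ∈ ℝ, p + t·u ∈ C. -/
open Filter Topology

/-- The points `p + (t / ‖a k‖) • (a k - p)` lie on segments from `p` into `C` and converge to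
`p + t • v`. -/
theorem Convex.add_smul_mem_of_tendsto_normalize {E ι : Type*} [NormedAddCommGroup E]
    [NormedSpace ℝ E] {l : Filter ι} [l.NeBot] {C : Set E} (hcl : IsClosed C)
    (hconv : Convex ℝ C) {a : ι → E} (ha : ∀ k, a k ∈ C)
    (hna : Tendsto (fun k => ‖a k‖) l atTop) {v : E}
    (hv : Tendsto (fun k => ‖a k‖⁻¹ • a k) l (𝓝 v)) {p : E} (hp : p ∈ C) {t : ℝ}
    (ht : 0 ≤ t) : p + t • v ∈ C := by
  have hinv : Tendsto (fun k => t * ‖a k‖⁻¹) l (𝓝 0) := by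
    simpa using (tendsto_inv_atTop_zero.comp hna).const_mul t
  have hlim : Tendsto (fun k => p + (t * ‖a k‖⁻¹) • (a k - p)) l (𝓝 (p + t • v)) := by
    have := (tendsto_const_nhds (x := p)).add ((hv.const_smul t).sub (hinv.smul_const p))
    simpa [smul_sub, mul_smul] using this
  refine hcl.mem_of_tendsto hlim ?_
  filter_upwards [hinv.eventually (ge_mem_nhds one_pos)] with k hk
  exact hconv.add_smul_sub_mem hp (ha k) ⟨by positivity, hk⟩

theorem opposite_rays_give_line_general (E : Type*) [NormedAddCommGroup E] [NormedSpace ℝ E]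
    (C : Set E) (hcl : IsClosed C) (hconv : Convex ℝ C)
    (a b : ℕ → E) (ha : ∀ k, a k ∈ C) (hb : ∀ k, b k ∈ C)
    (hna : Tendsto (fun k => ‖a k‖) atTop atTop)
    (hnb : Tendsto (fun k => ‖b k‖) atTop atTop)
    (u : E)
    (hua : Tendsto (fun k => ‖a k‖⁻¹ • a k) atTop (nhds u))
    (hub : Tendsto (fun k => ‖b k‖⁻¹ • b k) atTop (nhds (-u))) :
    ∀ p ∈ C, ∀ t : ℝ, p + t • u ∈ C := by
  intro p hp t
  rcases le_total 0 t with ht | ht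
  · exact hconv.add_smul_mem_of_tendsto_normalize hcl ha hna hua hp ht
  · simpa using hconv.add_smul_mem_of_tendsto_normalize hcl hb hnb hub hp (neg_nonneg.2 ht)

/-- If a closed convex set `C` (with `0 ∈ C`) in a real normed space contains sequences
going to infinity in directions converging to `u` and to `-u`, then `C` contains the full
line in direction `u` through each of its points. -/
theorem opposite_rays_give_line (E : Type*) [NormedAddCommGroup E] [NormedSpace ℝ E]
    (C : Set E) (hcl : IsClosed C) (hconv : Convex ℝ C) (h0 : (0 : E) ∈ C)
    (a b : ℕ → E) (ha : ∀ k, a k ∈ C) (hb : ∀ k, b k ∈ C)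
    (hna : Tendsto (fun k => ‖a k‖) atTop atTop)
    (hnb : Tendsto (fun k => ‖b k‖) atTop atTop)
    (u : E)
    (hua : Tendsto (fun k => ‖a k‖⁻¹ • a k) atTop (nhds u))
    (hub : Tendsto (fun k => ‖b k‖⁻¹ • b k) atTop (nhds (-u))) :
    ∀ p ∈ C, ∀ t : ℝ, p + t • u ∈ C :=
  opposite_rays_give_line_general E C hcl hconv a b ha hb hna hnb u hua hub
end

section
/- Let j > 0, let f : [0, j] → [0, ∞), and let t* ∈ (0, j) be such that λ := f(t*) > 0 and t(j − t)·f(t)² ≤ t*(j − t*)·λ² for all t ∈ [0, j]. Set α := −λ²·t* and ω := λ²·(j − t*). Then for every τ ∈ (α, ω), the rescaled function satisfies λ⁻¹·f(λ⁻²·τ + t*) ≤ √( ((−α)/(τ − α)) · (ω/(ω − τ)) ). -/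
/-!
Under the time change `t = λ⁻²τ + t*` the weight `t(j - t)` becomes `(τ - α)(ω - τ)/λ⁴` and
`t*(j - t*)` becomes `(-α)ω/λ⁴`, so dividing the maximality inequality by `λ²·t(j - t)` bounds
the square of the rescaled function by `((-α)/(τ - α))·(ω/(ω - τ))`.
-/

section Rescaling

variable {c s j τ : ℝ}

lemma inv_mul_add_eq_sub_neg_div (hc : c ≠ 0) : c⁻¹ * τ + s = (τ - -(c * s)) / c := by
  field_simp
  ring

lemma sub_inv_mul_add_eq_mul_sub_sub_div (hc : c ≠ 0) :
    j - (c⁻¹ * τ + s) = (c * (j - s) - τ) / c := by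
  field_simp
  ring

lemma mul_sub_div_inv_mul_add_mul_sub (hc : c ≠ 0) :
    s * (j - s) / ((c⁻¹ * τ + s) * (j - (c⁻¹ * τ + s))) =
      c * s / (τ - -(c * s)) * (c * (j - s) / (c * (j - s) - τ)) := by
  rw [sub_inv_mul_add_eq_mul_sub_sub_div hc, inv_mul_add_eq_sub_neg_div hc, div_mul_div_comm,
    div_div_eq_mul_div, div_mul_div_comm]
  field_simp

end Rescaling

lemma abs_inv_mul_le_sqrt_div {p q x y : ℝ} (hp : 0 < p) (hy : y ≠ 0)
    (h : p * x ^ 2 ≤ q * y ^ 2) : |y⁻¹ * x| ≤ √(q / p) := by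
  apply Real.abs_le_sqrt
  rw [mul_pow, inv_pow, le_div_iff₀ hp, inv_mul_eq_div, div_mul_eq_mul_div,
    div_le_iff₀ (by positivity)]
  linarith

theorem typeIIb_rescaled_bound_general (j : ℝ) (f : ℝ → ℝ)
    (tstar : ℝ) (hlam : 0 < f tstar)
    (hmax : ∀ t ∈ Set.Icc (0 : ℝ) j,
      t * (j - t) * f t ^ 2 ≤ tstar * (j - tstar) * f tstar ^ 2) :
    ∀ τ ∈ Set.Ioo (-(f tstar ^ 2 * tstar)) (f tstar ^ 2 * (j - tstar)),
      (f tstar)⁻¹ * f ((f tstar ^ 2)⁻¹ * τ + tstar) ≤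
        Real.sqrt ((f tstar ^ 2 * tstar / (τ - -(f tstar ^ 2 * tstar))) *
          (f tstar ^ 2 * (j - tstar) / (f tstar ^ 2 * (j - tstar) - τ))) := by
  rintro τ ⟨hα, hω⟩
  have hc : 0 < f tstar ^ 2 := pow_pos hlam 2
  have ht : 0 < (f tstar ^ 2)⁻¹ * τ + tstar := by
    rw [inv_mul_add_eq_sub_neg_div hc.ne']
    exact div_pos (sub_pos.2 hα) hc
  have hjt : 0 < j - ((f tstar ^ 2)⁻¹ * τ + tstar) := by
    rw [sub_inv_mul_add_eq_mul_sub_sub_div hc.ne']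
    exact div_pos (sub_pos.2 hω) hc
  set t := (f tstar ^ 2)⁻¹ * τ + tstar
  calc (f tstar)⁻¹ * f t
      ≤ |(f tstar)⁻¹ * f t| := le_abs_self _
    _ ≤ √(tstar * (j - tstar) / (t * (j - t))) :=
      abs_inv_mul_le_sqrt_div (mul_pos ht hjt) hlam.ne' (hmax t ⟨ht.le, by linarith⟩)
    _ = _ := by rw [mul_sub_div_inv_mul_add_mul_sub hc.ne']

/-- Type-IIb point-picking inequality: if `t*(j - t*)·f(t*)²` maximizes `t(j - t)·f(t)²`
over `[0, j]`, `λ := f(t*) > 0`, `α := -λ²t*`, `ω := λ²(j - t*)`, then for every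
`τ ∈ (α, ω)` the rescaled function satisfies
`λ⁻¹ f(λ⁻²τ + t*) ≤ √(((-α)/(τ - α))·(ω/(ω - τ)))`. -/
theorem typeIIb_rescaled_bound (j : ℝ) (hj : 0 < j) (f : ℝ → ℝ)
    (hf : ∀ t ∈ Set.Icc (0 : ℝ) j, 0 ≤ f t)
    (tstar : ℝ) (htstar : tstar ∈ Set.Ioo (0 : ℝ) j) (hlam : 0 < f tstar)
    (hmax : ∀ t ∈ Set.Icc (0 : ℝ) j,
      t * (j - t) * f t ^ 2 ≤ tstar * (j - tstar) * f tstar ^ 2) :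
    ∀ τ ∈ Set.Ioo (-(f tstar ^ 2 * tstar)) (f tstar ^ 2 * (j - tstar)),
      (f tstar)⁻¹ * f ((f tstar ^ 2)⁻¹ * τ + tstar) ≤
        Real.sqrt ((f tstar ^ 2 * tstar / (τ - -(f tstar ^ 2 * tstar))) *
          (f tstar ^ 2 * (j - tstar) / (f tstar ^ 2 * (j - tstar) - τ))) :=
  typeIIb_rescaled_bound_general j f tstar hlam hmax
end

section
/- Let α > 0 and S > 0. Let ρ, v : [0, S] → ℝ with ρ(0) = 0, ρ(s) ≥ 0 for all s, ρ differentiable with ρ′(s) ≤ v(s), and v(s) ≥ (α/2)·ρ(s) for all s. Let h : [0, S] → (0, ∞) be differentiable with h′(s) ≤ −α·v(s)²·h(s) for all s ∈ [0, S]. Then h(S) ≤ h(0)·exp(−(α²/4)·ρ(S)²). -/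
/-!
Along the curve, `h · exp(α²ρ²/4)` is nonincreasing: its logarithmic derivative is
`h'/h + (α²/2) ρ ρ' ≤ -α v² + (α²/2) ρ v ≤ 0`, because `(α/2) ρ ≤ v` makes `v ≥ 0` and bounds
`(α²/2) ρ v = α · ((α/2) ρ) · v` by `α v²`. Comparing its values at `0` and `S`, where `ρ(0) = 0`,
gives the Gaussian bound.
-/

open Set Real

/-- Integrating factor: `h' ≤ -φ' h` makes `h · exp φ` antitone. -/
theorem le_mul_exp_sub_of_hasDerivAt_le_neg_mul {h h' φ φ' : ℝ → ℝ} {a b : ℝ} (hab : a ≤ b)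
    (hh : ∀ s ∈ Icc a b, HasDerivAt h (h' s) s) (hφ : ∀ s ∈ Icc a b, HasDerivAt φ (φ' s) s)
    (hineq : ∀ s ∈ Icc a b, h' s ≤ -φ' s * h s) :
    h b ≤ h a * exp (-(φ b - φ a)) := by
  have hderiv : ∀ s ∈ Icc a b,
      HasDerivAt (fun t => h t * exp (φ t)) (h' s * exp (φ s) + h s * (exp (φ s) * φ' s)) s :=
    fun s hs => (hh s hs).mul (hφ s hs).exp
  have hanti : AntitoneOn (fun t => h t * exp (φ t)) (Icc a b) := by
    refine antitoneOn_of_deriv_nonpos (convex_Icc a b)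
      (fun s hs => (hderiv s hs).continuousAt.continuousWithinAt)
      (fun s hs => ?_) (fun s hs => ?_) <;> rw [interior_Icc] at hs
    · exact (hderiv s (Ioo_subset_Icc_self hs)).differentiableAt.differentiableWithinAt
    · have hs := Ioo_subset_Icc_self hs
      rw [(hderiv s hs).deriv]
      nlinarith [hineq s hs, exp_pos (φ s)]
  have hba := hanti (left_mem_Icc.2 hab) (right_mem_Icc.2 hab) hab
  rw [exp_neg, exp_sub, inv_div, ← mul_div_assoc, le_div_iff₀ (exp_pos _)]
  exact hba

theorem sq_mul_mul_le_mul_sq {α r r' v : ℝ} (hα : 0 ≤ α) (hr : 0 ≤ r) (hr' : r' ≤ v)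
    (hv : α / 2 * r ≤ v) : α ^ 2 / 2 * (r * r') ≤ α * v ^ 2 := by
  have hv₀ : 0 ≤ v := (by positivity : 0 ≤ α / 2 * r).trans hv
  calc α ^ 2 / 2 * (r * r') ≤ α ^ 2 / 2 * (r * v) := by gcongr
    _ = α * (α / 2 * r) * v := by ring
    _ ≤ α * v * v := by gcongr
    _ = α * v ^ 2 := by ring

/-- Gaussian decay for pinched expanders: if `ρ(0) = 0`, `ρ ≥ 0`, `ρ' ≤ v`,
`v ≥ (α/2)ρ`, and `h > 0` is differentiable with `h' ≤ -α v² h` on `[0, S]`, then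
`h(S) ≤ h(0)·exp(-(α²/4)·ρ(S)²)`. -/
theorem expander_gaussian_decay (α S : ℝ) (hα : 0 < α) (hS : 0 < S)
    (ρ ρ' v : ℝ → ℝ) (hρ0 : ρ 0 = 0)
    (hρ_nonneg : ∀ s ∈ Set.Icc (0 : ℝ) S, 0 ≤ ρ s)
    (hρderiv : ∀ s ∈ Set.Icc (0 : ℝ) S, HasDerivAt ρ (ρ' s) s)
    (hρ' : ∀ s ∈ Set.Icc (0 : ℝ) S, ρ' s ≤ v s)
    (hv : ∀ s ∈ Set.Icc (0 : ℝ) S, α / 2 * ρ s ≤ v s)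
    (h h' : ℝ → ℝ) (hpos : ∀ s ∈ Set.Icc (0 : ℝ) S, 0 < h s)
    (hderiv : ∀ s ∈ Set.Icc (0 : ℝ) S, HasDerivAt h (h' s) s)
    (hineq : ∀ s ∈ Set.Icc (0 : ℝ) S, h' s ≤ -α * v s ^ 2 * h s) :
    h S ≤ h 0 * Real.exp (-(α ^ 2 / 4) * ρ S ^ 2) := by
  have hφ : ∀ s ∈ Icc 0 S,
      HasDerivAt (fun t => α ^ 2 / 4 * ρ t ^ 2) (α ^ 2 / 2 * (ρ s * ρ' s)) s := fun s hs =>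
    (((hρderiv s hs).pow 2).const_mul _).congr_deriv (by ring)
  have hdecay : ∀ s ∈ Icc 0 S, h' s ≤ -(α ^ 2 / 2 * (ρ s * ρ' s)) * h s := fun s hs =>
    (hineq s hs).trans <| by
      have := sq_mul_mul_le_mul_sq hα.le (hρ_nonneg s hs) (hρ' s hs) (hv s hs)
      nlinarith [hpos s hs]
  convert le_mul_exp_sub_of_hasDerivAt_le_neg_mul hS.le hderiv hφ hdecay using 3
  simp only [hρ0]
  ring
end
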